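/- A WMG≤ system without source places is live if and only if every elementary circuit P-subsystem of it satisfies property E (i.e. every potentially reachable marking of that subsystem enables at least one transition of the subsystem). -/

import Mathlib

open scoped Classical

structure PetriNet (P T : Type) where
  pre : P → T → ℕ
  post : T → P → ℕ

namespace PetriNet

variable {P T : Type}

def enabled (N : PetriNet P T) (M : P → ℕ) (t : T) : Prop :=
  ∀ p, N.pre p t ≤ M p

def fire (N : PetriNet P T) (M : P → ℕ) (t : T) : P → ℕ :=
  fun p => M p - N.pre p t + N.post t p

def feasible (N : PetriNet P T) : (P → ℕ) → List T → (P → ℕ) → Prop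
  | M, [], M' => M' = M
  | M, t :: σ, M' => N.enabled M t ∧ feasible N (N.fire M t) σ M'

def reachable (N : PetriNet P T) (M0 M : P → ℕ) : Prop :=
  ∃ σ : List T, N.feasible M0 σ M

def inc (N : PetriNet P T) (p : P) (t : T) : ℤ :=
  (N.post t p : ℤ) - (N.pre p t : ℤ)

def potReach [Fintype T] (N : PetriNet P T) (M0 M : P → ℕ) : Prop :=
  ∃ Y : T → ℕ, ∀ p, (M p : ℤ) = (M0 p : ℤ) + ∑ t, N.inc p t * (Y t : ℤ)

def live (N : PetriNet P T) (M0 : P → ℕ) : Prop :=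
  ∀ (t : T) (M : P → ℕ), N.reachable M0 M →
    ∃ M', N.reachable M M' ∧ N.enabled M' t

def bounded (N : PetriNet P T) (M0 : P → ℕ) : Prop :=
  ∃ k : ℕ, ∀ M : P → ℕ, N.reachable M0 M → ∀ p, M p ≤ k

def reversible (N : PetriNet P T) (M0 : P → ℕ) : Prop :=
  ∀ M : P → ℕ, N.reachable M0 M → N.reachable M M0

def rev (N : PetriNet P T) : PetriNet P T :=
  ⟨fun p t => N.post t p, fun t p => N.pre p t⟩

def propR (N : PetriNet P T) (M0 : P → ℕ) : Prop :=
  N.reversible M0 ∧ N.rev.reversible M0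

def placePre [Fintype T] (N : PetriNet P T) (p : P) : Finset T :=
  Finset.univ.filter fun t => 0 < N.post t p

def placePost [Fintype T] (N : PetriNet P T) (p : P) : Finset T :=
  Finset.univ.filter fun t => 0 < N.pre p t

def transPre [Fintype P] (N : PetriNet P T) (t : T) : Finset P :=
  Finset.univ.filter fun p => 0 < N.pre p t

def transPost [Fintype P] (N : PetriNet P T) (t : T) : Finset P :=
  Finset.univ.filter fun p => 0 < N.post t p

def arc (N : PetriNet P T) : (P ⊕ T) → (P ⊕ T) → Prop
  | Sum.inl p, Sum.inr t => 0 < N.pre p t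
  | Sum.inr t, Sum.inl p => 0 < N.post t p
  | _, _ => False

def stronglyConnected (N : PetriNet P T) : Prop :=
  ∀ x y : P ⊕ T, Relation.ReflTransGen N.arc x y

def connectedNet (N : PetriNet P T) : Prop :=
  ∀ x y : P ⊕ T, Relation.ReflTransGen (fun a b => N.arc a b ∨ N.arc b a) x y

def ordinary (N : PetriNet P T) : Prop :=
  ∀ p t, N.pre p t ≤ 1 ∧ N.post t p ≤ 1

def isWMGle [Fintype T] (N : PetriNet P T) : Prop :=
  ∀ p, (N.placePre p).card ≤ 1 ∧ (N.placePost p).card ≤ 1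

def deadlock (N : PetriNet P T) (M : P → ℕ) : Prop :=
  ∀ t, ¬ N.enabled M t

end PetriNet


namespace PetriNet

variable {P T : Type}

/-- A transition is adjacent to the place set `D`. -/
def adjT (N : PetriNet P T) (D : Finset P) (t : T) : Prop :=
  ∃ p ∈ D, 0 < N.pre p t ∨ 0 < N.post t p

/-- The P-subnet induced by the place set `D`:
its transitions are those adjacent to `D`, weights are restricted. -/
def psubnet (N : PetriNet P T) (D : Finset P) :
    PetriNet {p : P // p ∈ D} {t : T // N.adjT D t} :=
  ⟨fun p t => N.pre p.1 t.1, fun t p => N.post t.1 p.1⟩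

/-- The net is a single directed cycle visiting each node exactly once. -/
def isCircuitNet [Fintype P] [Fintype T] (N : PetriNet P T) : Prop :=
  Nonempty (P ⊕ T) ∧ N.stronglyConnected ∧
  (∀ p, (N.placePre p).card = 1 ∧ (N.placePost p).card = 1) ∧
  (∀ t, (N.transPre t).card = 1 ∧ (N.transPost t).card = 1)

end PetriNet

/-!
Live ⇒ property E: if a circuit subsystem had a dead potentially reachable marking
`M = M0 + I·Y`, none of its transitions could ever fire more than `Y` times, since the input
place it lacks in `M` is refilled only by its producer, itself bounded by `Y`; liveness fires
it arbitrarily often.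

Not live ⇒ not E: in a WMG≤ a dead transition never removes tokens from its input places, so
one of them starves forever, and then the producer of that place dies as well. Once the set of
dead transitions has stopped growing, following starved places back to their producers stays
inside it and closes a cycle, which is an elementary circuit; the marking reached at that point
is potentially reachable in the circuit subsystem and enables none of its transitions.
-/

section MinimalMapsTo

variable {α : Type*} [DecidableEq α] {C : Finset α} {h : α → α}

lemma Finset.image_eq_self_of_minimal_mapsTo
    (hmin : Minimal (fun S : Finset α => S.Nonempty ∧ Set.MapsTo h S S) C) : C.image h = C := by
  have hmaps : Set.MapsTo h ↑(C.image h) ↑(C.image h) := by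
    intro x hx
    obtain ⟨y, hy, rfl⟩ := Finset.mem_image.1 hx
    exact Finset.mem_image_of_mem h (hmin.prop.2 hy)
  exact (hmin.eq_of_ge ⟨hmin.prop.1.image h, hmaps⟩
    (Finset.image_subset_iff.2 fun x hx => hmin.prop.2 hx)).symm

lemma Finset.injOn_of_minimal_mapsTo
    (hmin : Minimal (fun S : Finset α => S.Nonempty ∧ Set.MapsTo h S S) C) : Set.InjOn h C :=
  Finset.card_image_iff.1 (by rw [Finset.image_eq_self_of_minimal_mapsTo hmin])

end MinimalMapsTo

lemma Finset.card_filter_univ_eq_one_iff {α : Type*} [Fintype α] {q : α → Prop}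
    [DecidablePred q] : (Finset.univ.filter q).card = 1 ↔ ∃! a, q a := by
  simp [Finset.card_eq_one_iff_existsUnique]

namespace PetriNet

variable {P T : Type} (N : PetriNet P T)

@[simp] lemma feasible_nil {M M' : P → ℕ} : N.feasible M [] M' ↔ M' = M := Iff.rfl

@[simp] lemma feasible_cons {M M' : P → ℕ} {t : T} {σ : List T} :
    N.feasible M (t :: σ) M' ↔ N.enabled M t ∧ N.feasible (N.fire M t) σ M' := Iff.rfl

lemma feasible_append {M M'' : P → ℕ} {σ τ : List T} :
    N.feasible M (σ ++ τ) M'' ↔ ∃ M', N.feasible M σ M' ∧ N.feasible M' τ M'' := by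
  induction σ generalizing M with
  | nil => simp
  | cons t σ ih => simp [ih, and_assoc]

lemma feasible_concat {M M'' : P → ℕ} {σ : List T} {t : T} :
    N.feasible M (σ ++ [t]) M'' ↔
      ∃ M', N.feasible M σ M' ∧ N.enabled M' t ∧ M'' = N.fire M' t := by
  simp [feasible_append]

lemma reachable_refl (M : P → ℕ) : N.reachable M M := ⟨[], rfl⟩

variable {N}

lemma reachable.trans {M₁ M₂ M₃ : P → ℕ} (h₁₂ : N.reachable M₁ M₂) (h₂₃ : N.reachable M₂ M₃) :
    N.reachable M₁ M₃ := by
  obtain ⟨σ, hσ⟩ := h₁₂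
  obtain ⟨τ, hτ⟩ := h₂₃
  exact ⟨σ ++ τ, N.feasible_append.2 ⟨M₂, hσ, hτ⟩⟩

lemma reachable_fire {M : P → ℕ} {t : T} (h : N.enabled M t) : N.reachable M (N.fire M t) :=
  ⟨[t], h, rfl⟩

lemma inc_eq_zero {p : P} {t : T} (hpre : N.pre p t = 0) (hpost : N.post t p = 0) :
    N.inc p t = 0 := by
  simp [inc, hpre, hpost]

lemma fire_apply {M : P → ℕ} {t : T} (h : N.enabled M t) (p : P) :
    (N.fire M t p : ℤ) = M p + N.inc p t := by
  simp only [fire, inc]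
  push_cast [Nat.cast_sub (h p)]
  ring

lemma feasible.state_eq [Fintype T] {M M' : P → ℕ} {σ : List T} (h : N.feasible M σ M') (p : P) :
    (M' p : ℤ) = M p + ∑ t, N.inc p t * (σ.count t : ℤ) := by
  induction σ generalizing M with
  | nil => simp [show M' = M from h]
  | cons u σ ih =>
    obtain ⟨hu, hσ⟩ := h
    simp only [ih hσ, fire_apply hu, List.count_cons, beq_iff_eq, Nat.cast_add, mul_add,
      Finset.sum_add_distrib, Nat.cast_ite, Nat.cast_one, Nat.cast_zero, mul_ite, mul_one, mul_zero,
      Finset.sum_ite_eq, Finset.mem_univ, if_true]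
    ring

lemma live.exists_count_ge {M0 : P → ℕ} (hlive : N.live M0) (t : T) (n : ℕ) :
    ∃ σ M, N.feasible M0 σ M ∧ n ≤ σ.count t := by
  induction n with
  | zero => exact ⟨[], M0, rfl, le_rfl⟩
  | succ n ih =>
    obtain ⟨σ, M, hσ, hn⟩ := ih
    obtain ⟨M', ⟨τ, hτ⟩, ht⟩ := hlive t M ⟨σ, hσ⟩
    refine ⟨σ ++ τ ++ [t], N.fire M' t, ?_, ?_⟩
    · exact N.feasible_append.2 ⟨M', N.feasible_append.2 ⟨M, hσ, hτ⟩, ht, rfl⟩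
    · simp only [List.count_append, List.count_singleton_self]
      omega

lemma isWMGle.eq_of_pre_pos [Fintype T] (hwmg : N.isWMGle) {p : P} {t t' : T}
    (h : 0 < N.pre p t) (h' : 0 < N.pre p t') : t = t' :=
  Finset.card_le_one.1 (hwmg p).2 t (by simpa [placePost]) t' (by simpa [placePost])

lemma isWMGle.eq_of_post_pos [Fintype T] (hwmg : N.isWMGle) {p : P} {t t' : T}
    (h : 0 < N.post t p) (h' : 0 < N.post t' p) : t = t' :=
  Finset.card_le_one.1 (hwmg p).1 t (by simpa [placePre]) t' (by simpa [placePre])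

lemma isCircuitNet.nonempty_transition [Fintype P] [Fintype T] (h : N.isCircuitNet) :
    Nonempty T := by
  obtain ⟨p | t⟩ := h.1
  · obtain ⟨t, -⟩ := Finset.card_pos.1 ((h.2.2.1 p).1 ▸ Nat.one_pos)
    exact ⟨t⟩
  · exact ⟨t⟩

lemma sum_inc_eq_sum_psubnet [Fintype T] {D : Finset P} {p : P} (hp : p ∈ D) (x : T → ℤ) :
    ∑ t, N.inc p t * x t = ∑ t : {t // N.adjT D t}, (N.psubnet D).inc ⟨p, hp⟩ t * x t := by
  have hvanish : ∀ t ∈ Finset.univ, N.inc p t * x t ≠ 0 → N.adjT D t := by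
    intro t _ ht
    by_contra hadj
    simp only [adjT, not_exists, not_and, not_or, not_lt, Nat.le_zero] at hadj
    exact ht (by rw [inc_eq_zero (hadj p hp).1 (hadj p hp).2, zero_mul])
  calc ∑ t, N.inc p t * x t = ∑ t ∈ Finset.univ.filter (N.adjT D), N.inc p t * x t :=
        (Finset.sum_filter_of_ne hvanish).symm
    _ = _ := Finset.sum_subtype _ (by simp) fun t => N.inc p t * x t

lemma reachable.potReach_psubnet [Fintype T] {M0 M : P → ℕ} (h : N.reachable M0 M)
    (D : Finset P) : (N.psubnet D).potReach (fun p => M0 p.1) (fun p => M p.1) := by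
  obtain ⟨σ, hσ⟩ := h
  exact ⟨fun t => σ.count t.1, fun p => by rw [hσ.state_eq, sum_inc_eq_sum_psubnet p.2]⟩

/-- Once `t` has fired `Y t` times, an input place `q` that `M` leaves short for `t` holds at
most `M q` tokens: only `t` consumes from `q`, and its producers have fired at most as often as
`Y` records. -/
lemma count_le_of_potReach_dead_psubnet [Fintype T] (hwmg : N.isWMGle) {D : Finset P}
    {M0 : P → ℕ} {M : {p // p ∈ D} → ℕ} {Y : {t // N.adjT D t} → ℕ}
    (hY : ∀ p, (M p : ℤ) = M0 p.1 + ∑ t, (N.psubnet D).inc p t * (Y t : ℤ))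
    (hdead : ∀ t, ¬ (N.psubnet D).enabled M t) {σ : List T} {M' : P → ℕ}
    (hσ : N.feasible M0 σ M') (t : {t // N.adjT D t}) : σ.count t.1 ≤ Y t := by
  induction σ using List.reverseRecOn generalizing M' t with
  | nil => simp
  | append_singleton σ u ih =>
    obtain ⟨M'', hrun, hu, -⟩ := N.feasible_concat.1 hσ
    simp only [List.count_append, List.count_singleton, beq_iff_eq]
    split_ifs with hut
    swap
    · exact ih hrun t
    subst hut
    by_contra! hcount
    replace hcount : σ.count t.1 = Y t := le_antisymm (ih hrun t) (by omega)
    obtain ⟨q, hq⟩ : ∃ q, M q < (N.psubnet D).pre q t := by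
      simpa only [enabled, not_forall, not_le] using hdead t
    change M q < N.pre q.1 t.1 at hq
    have hle : (M'' q.1 : ℤ) ≤ M q := by
      rw [hrun.state_eq, sum_inc_eq_sum_psubnet q.2, hY q]
      refine add_le_add_right (Finset.sum_le_sum fun s _ => ?_) _
      by_cases hst : s = t
      · rw [hst, hcount]
      have hpre : N.pre q.1 s.1 = 0 := by
        by_contra hs
        exact hst (Subtype.ext (hwmg.eq_of_pre_pos (Nat.pos_of_ne_zero hs) (by omega)))
      have hinc : 0 ≤ (N.psubnet D).inc q s := by simp [inc, psubnet, hpre]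
      exact mul_le_mul_of_nonneg_left (by exact_mod_cast ih hrun s) hinc
    have := hu q.1
    omega

lemma not_live_of_potReach_dead_psubnet [Fintype T] (hwmg : N.isWMGle) {D : Finset P}
    [Nonempty {t // N.adjT D t}] {M0 : P → ℕ} {M : {p // p ∈ D} → ℕ}
    (hpr : (N.psubnet D).potReach (fun p => M0 p.1) M)
    (hdead : ∀ t, ¬ (N.psubnet D).enabled M t) : ¬ N.live M0 := by
  intro hlive
  obtain ⟨Y, hY⟩ := hpr
  obtain ⟨t⟩ := ‹Nonempty {t // N.adjT D t}›
  obtain ⟨σ, M', hσ, hcount⟩ := hlive.exists_count_ge t.1 (Y t + 1)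
  have := count_le_of_potReach_dead_psubnet hwmg hY hdead hσ t
  omega

variable (N) in
def deadAt (M : P → ℕ) (t : T) : Prop :=
  ∀ M', N.reachable M M' → ¬ N.enabled M' t

variable (N) in
def starvedAt (M : P → ℕ) (p : P) (t : T) : Prop :=
  ∀ M', N.reachable M M' → M' p < N.pre p t

lemma deadAt.of_reachable {M M' : P → ℕ} {t : T} (ht : N.deadAt M t) (hr : N.reachable M M') :
    N.deadAt M' t :=
  fun M'' hr' => ht M'' (hr.trans hr')

lemma starvedAt.of_reachable {M M' : P → ℕ} {p : P} {t : T} (hp : N.starvedAt M p t)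
    (hr : N.reachable M M') : N.starvedAt M' p t :=
  fun M'' hr' => hp M'' (hr.trans hr')

lemma starvedAt.pre_pos {M : P → ℕ} {p : P} {t : T} (hp : N.starvedAt M p t) :
    0 < N.pre p t :=
  (Nat.zero_le _).trans_lt (hp M (N.reachable_refl M))

/-- Only `t` consumes from its input places, so they never lose tokens while `t` is dead. -/
lemma deadAt.le_of_reachable [Fintype T] (hwmg : N.isWMGle) {M M' : P → ℕ} {p : P} {t : T}
    (ht : N.deadAt M t) (hp : 0 < N.pre p t) (hr : N.reachable M M') : M p ≤ M' p := by
  obtain ⟨σ, hσ⟩ := hr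
  induction σ generalizing M with
  | nil => rw [show M' = M from hσ]
  | cons u σ ih =>
    obtain ⟨hu, hσ⟩ := hσ
    have hpu : N.pre p u = 0 := by
      by_contra h
      exact ht M (N.reachable_refl M) (hwmg.eq_of_pre_pos (Nat.pos_of_ne_zero h) hp ▸ hu)
    calc M p ≤ N.fire M u p := by simp [fire, hpu]
      _ ≤ M' p := ih (ht.of_reachable (reachable_fire hu)) hσ

lemma deadAt.exists_starvedAt [Fintype P] [Fintype T] (hwmg : N.isWMGle) {M : P → ℕ} {t : T}
    (ht : N.deadAt M t) : ∃ M', N.reachable M M' ∧ ∃ p, N.starvedAt M' p t := by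
  by_contra! hc
  simp only [starvedAt, not_forall, not_lt] at hc
  have hcover : ∀ G : Finset P, ∃ M', N.reachable M M' ∧ ∀ p ∈ G, N.pre p t ≤ M' p := by
    intro G
    induction G using Finset.induction_on with
    | empty => exact ⟨M, N.reachable_refl M, by simp⟩
    | insert a G _ ih =>
      obtain ⟨M', hM', hG⟩ := ih
      obtain ⟨M'', hM'', ha⟩ := hc M' hM' a
      refine ⟨M'', hM'.trans hM'', Finset.forall_mem_insert _ _ _ |>.2 ⟨ha, fun p hp => ?_⟩⟩
      rcases Nat.eq_zero_or_pos (N.pre p t) with hp0 | hp0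
      · simp [hp0]
      · exact (hG p hp).trans ((ht.of_reachable hM').le_of_reachable hwmg hp0 hM'')
  obtain ⟨M', hM', hen⟩ := hcover Finset.univ
  exact ht M' hM' fun p => hen p (Finset.mem_univ p)

/-- Once `p` starves, the tokens on `p` stop growing at some marking, and from there on
the producer `u` of `p` can never fire again. -/
lemma deadAt.exists_deadAt_producer [Fintype T] (hwmg : N.isWMGle) {M : P → ℕ} {p : P}
    {t u : T} (ht : N.deadAt M t) (hp : N.starvedAt M p t) (hu : 0 < N.post u p) :
    ∃ M', N.reachable M M' ∧ N.deadAt M' u := by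
  by_cases hut : u = t
  · exact ⟨M, N.reachable_refl M, hut ▸ ht⟩
  have hpu : N.pre p u = 0 := by
    by_contra h
    exact hut (hwmg.eq_of_pre_pos (Nat.pos_of_ne_zero h) hp.pre_pos)
  set S : Set ℕ := (fun M' => M' p) '' {M' | N.reachable M M'}
  have hbdd : BddAbove S := ⟨N.pre p t, by rintro _ ⟨M', hM', rfl⟩; exact (hp M' hM').le⟩
  obtain ⟨M', hM', hmax⟩ := Nat.sSup_mem (s := S) ⟨M p, M, N.reachable_refl M, rfl⟩ hbdd
  refine ⟨M', hM', fun M'' hM'' hen => ?_⟩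
  have hgrow : M' p ≤ M'' p := (ht.of_reachable hM').le_of_reachable hwmg hp.pre_pos hM''
  have hfire : N.fire M'' u p ≤ sSup S :=
    le_csSup hbdd ⟨_, (hM'.trans hM'').trans (reachable_fire hen), rfl⟩
  simp only [fire, hpu] at hfire hmax
  omega

lemma exists_reachable_forall_starvedAt [Fintype P] [Fintype T] (hwmg : N.isWMGle)
    {M : P → ℕ} (C : Finset T) (hC : ∀ c ∈ C, N.deadAt M c) :
    ∃ M', N.reachable M M' ∧ ∀ c ∈ C, ∃ p, N.starvedAt M' p c := by
  induction C using Finset.induction_on with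
  | empty => exact ⟨M, N.reachable_refl M, by simp⟩
  | insert a C _ ih =>
    rw [Finset.forall_mem_insert] at hC
    obtain ⟨M', hM', hC'⟩ := ih hC.2
    obtain ⟨M'', hM'', p, hp⟩ := (hC.1.of_reachable hM').exists_starvedAt hwmg
    refine ⟨M'', hM'.trans hM'', Finset.forall_mem_insert _ _ _ |>.2 ⟨⟨p, hp⟩, fun c hc => ?_⟩⟩
    exact (hC' c hc).imp fun q hq => hq.of_reachable hM''

lemma deadAt.exists_reachable_forall_deadAt_mem [Fintype T] {M : P → ℕ} {t : T}
    (ht : N.deadAt M t) :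
    ∃ (M' : P → ℕ) (S : Finset T), N.reachable M M' ∧ t ∈ S ∧ (∀ c ∈ S, N.deadAt M' c) ∧
      ∀ M'' c, N.reachable M' M'' → N.deadAt M'' c → c ∈ S := by
  obtain ⟨S, hS, ⟨M', hM', hdead⟩, hmax⟩ := exists_maximal_ge_of_wellFoundedGT
    (fun S : Finset T => ∃ M', N.reachable M M' ∧ ∀ c ∈ S, N.deadAt M' c) {t}
    ⟨M, N.reachable_refl M, by simpa using ht⟩
  refine ⟨M', S, hM', Finset.singleton_subset_iff.1 hS, hdead, fun M'' c hM'' hc => ?_⟩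
  have hins : ∀ c' ∈ insert c S, N.deadAt M'' c' :=
    Finset.forall_mem_insert _ _ _ |>.2 ⟨hc, fun c' hc' => (hdead c' hc').of_reachable hM''⟩
  exact hmax ⟨M'', hM'.trans hM'', hins⟩ (Finset.subset_insert c S) (Finset.mem_insert_self c S)

lemma adjT_image_iff [Fintype T] (hwmg : N.isWMGle) {C : Finset T} {f : T → P} {h : T → T}
    (hpre : ∀ c ∈ C, 0 < N.pre (f c) c) (hpost : ∀ c ∈ C, 0 < N.post (h c) (f c))
    (hmaps : Set.MapsTo h C C) {u : T} : N.adjT (C.image f) u ↔ u ∈ C := by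
  refine ⟨fun hu => ?_, fun hu => ⟨f u, Finset.mem_image_of_mem f hu, Or.inl (hpre u hu)⟩⟩
  obtain ⟨_, hp, hpu | hup⟩ := hu <;> obtain ⟨c, hc, rfl⟩ := Finset.mem_image.1 hp
  · rwa [hwmg.eq_of_pre_pos hpu (hpre c hc)]
  · rw [hwmg.eq_of_post_pos hup (hpost c hc)]
    exact hmaps hc

/-- The arcs `h c → f c → c` show that the transitions reaching a given one form an
`h`-invariant subset of `C`, hence all of `C`. -/
lemma stronglyConnected_psubnet_image [Fintype T] (hwmg : N.isWMGle) {C : Finset T}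
    {f : T → P} {h : T → T} (hpre : ∀ c ∈ C, 0 < N.pre (f c) c)
    (hpost : ∀ c ∈ C, 0 < N.post (h c) (f c))
    (hmin : Minimal (fun S : Finset T => S.Nonempty ∧ Set.MapsTo h S S) C) :
    (N.psubnet (C.image f)).stronglyConnected := by
  set D := C.image f
  have hmaps : Set.MapsTo h C C := hmin.prop.2
  have hadj : ∀ {u}, N.adjT D u ↔ u ∈ C := adjT_image_iff hwmg hpre hpost hmaps
  have hfD : ∀ {c}, c ∈ C → f c ∈ D := fun hc => Finset.mem_image_of_mem f hc
  have arc_pt : ∀ c (hc : c ∈ C),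
      (N.psubnet D).arc (.inl ⟨f c, hfD hc⟩) (.inr ⟨c, hadj.2 hc⟩) := hpre
  have arc_tp : ∀ c (hc : c ∈ C),
      (N.psubnet D).arc (.inr ⟨h c, hadj.2 (hmaps hc)⟩) (.inl ⟨f c, hfD hc⟩) := hpost
  have reach_tt : ∀ a (ha : a ∈ C) b (hb : b ∈ C),
      Relation.ReflTransGen (N.psubnet D).arc (.inr ⟨b, hadj.2 hb⟩) (.inr ⟨a, hadj.2 ha⟩) := by
    intro a ha
    set S := C.filter fun b => ∀ hb : b ∈ C,
      Relation.ReflTransGen (N.psubnet D).arc (.inr ⟨b, hadj.2 hb⟩) (.inr ⟨a, hadj.2 ha⟩)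
    have hSmaps : Set.MapsTo h S S := by
      intro b hb
      simp only [S, Finset.mem_coe, Finset.mem_filter] at hb ⊢
      exact ⟨hmaps hb.1, fun _ => .head (arc_tp b hb.1) (.head (arc_pt b hb.1) (hb.2 hb.1))⟩
    have hSC : C = S :=
      hmin.eq_of_ge ⟨⟨a, Finset.mem_filter.2 ⟨ha, fun _ => .refl⟩⟩, hSmaps⟩
        (Finset.filter_subset _ _)
    intro b hb
    exact (Finset.mem_filter.1 (hSC ▸ hb : b ∈ S)).2 hb
  intro x y
  obtain ⟨a, ha, hxa⟩ : ∃ a, ∃ ha : a ∈ C,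
      Relation.ReflTransGen (N.psubnet D).arc x (.inr ⟨a, hadj.2 ha⟩) := by
    rcases x with ⟨p, hp⟩ | ⟨t, ht⟩
    · obtain ⟨c, hc, rfl⟩ := Finset.mem_image.1 hp
      exact ⟨c, hc, .single (arc_pt c hc)⟩
    · exact ⟨t, hadj.1 ht, .refl⟩
  obtain ⟨b, hb, hby⟩ : ∃ b, ∃ hb : b ∈ C,
      Relation.ReflTransGen (N.psubnet D).arc (.inr ⟨b, hadj.2 hb⟩) y := by
    rcases y with ⟨p, hp⟩ | ⟨t, ht⟩
    · obtain ⟨c, hc, rfl⟩ := Finset.mem_image.1 hp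
      exact ⟨h c, hmaps hc, .single (arc_tp c hc)⟩
    · exact ⟨t, hadj.1 ht, .refl⟩
  exact hxa.trans ((reach_tt b hb a ha).trans hby)

theorem isCircuitNet_psubnet_image [Fintype P] [Fintype T] (hwmg : N.isWMGle) {C : Finset T}
    {f : T → P} {h : T → T} (hpre : ∀ c ∈ C, 0 < N.pre (f c) c)
    (hpost : ∀ c ∈ C, 0 < N.post (h c) (f c))
    (hmin : Minimal (fun S : Finset T => S.Nonempty ∧ Set.MapsTo h S S) C) :
    (N.psubnet (C.image f)).isCircuitNet := by
  have hmaps : Set.MapsTo h C C := hmin.prop.2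
  have hadj : ∀ {u}, N.adjT (C.image f) u ↔ u ∈ C := adjT_image_iff hwmg hpre hpost hmaps
  obtain ⟨c₀, hc₀⟩ := hmin.prop.1
  refine ⟨⟨.inr ⟨c₀, hadj.2 hc₀⟩⟩, stronglyConnected_psubnet_image hwmg hpre hpost hmin,
    fun p => ?_, fun t => ?_⟩
  · obtain ⟨c, hc, hcp⟩ := Finset.mem_image.1 p.2
    simp only [placePre, placePost, Finset.card_filter_univ_eq_one_iff]
    constructor
    · have hhc : 0 < N.post (h c) p.1 := hcp ▸ hpost c hc
      exact ⟨⟨h c, hadj.2 (hmaps hc)⟩, hhc, fun t ht => Subtype.ext (hwmg.eq_of_post_pos ht hhc)⟩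
    · have hcc : 0 < N.pre p.1 c := hcp ▸ hpre c hc
      exact ⟨⟨c, hadj.2 hc⟩, hcc, fun t ht => Subtype.ext (hwmg.eq_of_pre_pos ht hcc)⟩
  · have ht := hadj.1 t.2
    simp only [transPre, transPost, Finset.card_filter_univ_eq_one_iff]
    constructor
    · refine ⟨⟨f t, Finset.mem_image_of_mem f ht⟩, hpre t ht, fun p hp => Subtype.ext ?_⟩
      obtain ⟨c, hc, hcp⟩ := Finset.mem_image.1 p.2
      change 0 < N.pre p.1 t.1 at hp
      change p.1 = f t.1
      rw [← hcp] at hp ⊢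
      rw [hwmg.eq_of_pre_pos hp (hpre c hc)]
    · have ht' : t.1 ∈ C.image h := by rwa [Finset.image_eq_self_of_minimal_mapsTo hmin]
      obtain ⟨c, hc, hct⟩ := Finset.mem_image.1 ht'
      have htc : 0 < N.post t.1 (f c) := hct ▸ hpost c hc
      refine ⟨⟨f c, Finset.mem_image_of_mem f hc⟩, htc, fun p hp => Subtype.ext ?_⟩
      obtain ⟨c', hc', hcp⟩ := Finset.mem_image.1 p.2
      change 0 < N.post t.1 p.1 at hp
      change p.1 = f c
      rw [← hcp] at hp ⊢
      have hhc : h c' = h c := (hwmg.eq_of_post_pos hp (hpost c' hc')).symm.trans hct.symm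
      rw [Finset.injOn_of_minimal_mapsTo hmin hc' hc hhc]

theorem exists_circuit_dead_of_not_live [Fintype P] [Fintype T] (hwmg : N.isWMGle)
    (hnosrc : ∀ p : P, ∃ t : T, 0 < N.post t p) {M0 : P → ℕ} (hnl : ¬ N.live M0) :
    ∃ D : Finset P, (N.psubnet D).isCircuitNet ∧
      ∃ M, (N.psubnet D).potReach (fun p => M0 p.1) M ∧ ∀ t, ¬ (N.psubnet D).enabled M t := by
  obtain ⟨t, M, hM, ht⟩ : ∃ t M, N.reachable M0 M ∧ N.deadAt M t := by
    simpa [live, deadAt] using hnl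
  obtain ⟨M₁, S, hM₁, htS, hSdead, hSmax⟩ := deadAt.exists_reachable_forall_deadAt_mem ht
  obtain ⟨M₂, hM₂, hstarved⟩ := exists_reachable_forall_starvedAt hwmg S hSdead
  have : Nonempty P := (hstarved t htS).nonempty
  choose! f hf using hstarved
  choose producer hproducer using hnosrc
  have hmaps : Set.MapsTo (producer ∘ f) S S := fun c hc => by
    obtain ⟨M₃, hM₃, hdead⟩ := ((hSdead c hc).of_reachable hM₂).exists_deadAt_producer hwmg
      (hf c hc) (hproducer (f c))
    exact hSmax M₃ _ (hM₂.trans hM₃) hdead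
  obtain ⟨C, hCS, hmin⟩ := exists_minimal_le_of_wellFoundedLT
    (fun S' : Finset T => S'.Nonempty ∧ Set.MapsTo (producer ∘ f) S' S') S ⟨⟨t, htS⟩, hmaps⟩
  have hpre : ∀ c ∈ C, 0 < N.pre (f c) c := fun c hc => (hf c (hCS hc)).pre_pos
  have hpost : ∀ c ∈ C, 0 < N.post (producer (f c)) (f c) := fun c _ => hproducer (f c)
  refine ⟨C.image f, isCircuitNet_psubnet_image hwmg hpre hpost hmin, _,
    (hM.trans (hM₁.trans hM₂)).potReach_psubnet _, fun u hu => ?_⟩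
  have hu' : u.1 ∈ C := (adjT_image_iff hwmg hpre hpost hmin.prop.2).1 u.2
  exact (hf u.1 (hCS hu') M₂ (N.reachable_refl M₂)).not_ge
    (hu ⟨f u.1, Finset.mem_image_of_mem f hu'⟩)

end PetriNet

/-- A WMG≤ system without source places is live iff every elementary circuit
P-subsystem of it satisfies property E (every potentially reachable marking of
the subsystem enables some transition of the subsystem). -/
theorem stmt6 {P T : Type} [Fintype P] [Fintype T]
    (N : PetriNet P T) (M0 : P → ℕ)
    (hwmg : N.isWMGle) (hnosrc : ∀ p : P, ∃ t : T, 0 < N.post t p) :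
    N.live M0 ↔
      ∀ D : Finset P, (N.psubnet D).isCircuitNet →
        ∀ M, (N.psubnet D).potReach (fun p => M0 p.1) M →
          ∃ t, (N.psubnet D).enabled M t := by
  refine ⟨fun hlive D hcirc M hpr => ?_, fun hE => ?_⟩
  · by_contra! hdead
    have := hcirc.nonempty_transition
    exact PetriNet.not_live_of_potReach_dead_psubnet hwmg hpr hdead hlive
  · by_contra hnl
    obtain ⟨D, hcirc, M, hpr, hdead⟩ := N.exists_circuit_dead_of_not_live hwmg hnosrc hnl
    obtain ⟨t, ht⟩ := hE D hcirc M hpr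
    exact hdead t ht
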